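/- arXiv:1211.2977 — 3 statements merged into one kernel-verified Lean document; each statement's English description precedes it below -/
import Mathlib

section
/- If f : ℂ \ {0} → ℂ is holomorphic on the punctured unit disk and has an essential singularity at 0 (i.e. the limit of f(x) as x → 0 does not exist in the Riemann sphere), then limsup_{r → 0} diam f(sphere 0 r) > 0, where diam is taken with respect to the spherical metric. -/
open Filter Topology Set

/-- The chordal (spherical) distance between two finite points of the Riemann sphere. -/
noncomputable def chordalDist (z w : ℂ) : ℝ :=
  2 * dist z w / (Real.sqrt (1 + ‖z‖ ^ 2) * Real.sqrt (1 + ‖w‖ ^ 2))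

/-- Diameter of a set of complex numbers with respect to the chordal metric. -/
noncomputable def sphericalDiam (S : Set ℂ) : ℝ :=
  sSup (Set.image2 chordalDist S S)

/-!
Suppose the chordal diameters of the images of the circles `‖z‖ = r` tend to `0`. Either
`‖f‖ → ∞` at `0`, so `f → ∞` in the Riemann sphere, or `f` has a finite cluster value `L`. Near a
finite point a small chordal diameter forces a small Euclidean one, so arbitrarily small circles
are mapped into arbitrarily small discs around `L`; the maximum modulus principle on the annuli
between two such circles then gives `f → L`. Either way `f` has a limit at `0`.
-/

open Metric
open scoped OnePoint

lemma chordalDist_le_two (z w : ℂ) : chordalDist z w ≤ 2 := by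
  have hdist : dist z w ≤ Real.sqrt ((1 + ‖z‖ ^ 2) * (1 + ‖w‖ ^ 2)) := by
    refine (dist_le_norm_add_norm z w).trans ?_
    rw [Real.le_sqrt (by positivity) (by positivity)]
    nlinarith [sq_nonneg (1 - ‖z‖ * ‖w‖)]
  rw [chordalDist, div_le_iff₀ (by positivity), ← Real.sqrt_mul (by positivity)]
  linarith

lemma two_mul_dist_div_le_chordalDist (z w : ℂ) :
    2 * dist z w / ((1 + ‖z‖) * (1 + ‖w‖)) ≤ chordalDist z w := by
  have hsqrt (x : ℂ) : Real.sqrt (1 + ‖x‖ ^ 2) ≤ 1 + ‖x‖ :=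
    (Real.sqrt_le_left (by positivity)).2 (by nlinarith [norm_nonneg x])
  unfold chordalDist
  gcongr
  exacts [hsqrt z, hsqrt w]

lemma dist_le_of_chordalDist_lt {B ε : ℝ} (hB : 0 ≤ B) (hε : 0 < ε) {z w : ℂ} (hw : ‖w‖ ≤ B)
    (h : chordalDist z w < 2 * ε / ((1 + B + ε) * (1 + B))) : dist z w ≤ ε := by
  by_contra! hd
  set d := dist z w
  have hz : ‖z‖ ≤ B + d := by
    linarith [norm_le_norm_add_norm_sub' z w, dist_eq_norm z w]
  -- `t ↦ t / (1 + B + t)` is increasing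
  have hmono : 2 * ε / ((1 + B + ε) * (1 + B)) ≤ 2 * d / ((1 + (B + d)) * (1 + B)) := by
    rw [div_le_div_iff₀ (by positivity) (by positivity)]
    nlinarith [mul_nonneg (mul_self_nonneg (1 + B)) (by linarith : (0 : ℝ) ≤ d - ε)]
  have hlower : 2 * d / ((1 + (B + d)) * (1 + B)) ≤ 2 * d / ((1 + ‖z‖) * (1 + ‖w‖)) := by
    gcongr
  linarith [two_mul_dist_div_le_chordalDist z w]

lemma two_mem_upperBounds_image2_chordalDist (S : Set ℂ) :
    2 ∈ upperBounds (image2 chordalDist S S) := by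
  rintro _ ⟨a, -, b, -, rfl⟩
  exact chordalDist_le_two a b

lemma sphericalDiam_le_two (S : Set ℂ) : sphericalDiam S ≤ 2 :=
  Real.sSup_le (two_mem_upperBounds_image2_chordalDist S) zero_le_two

lemma chordalDist_le_sphericalDiam {S : Set ℂ} {a b : ℂ} (ha : a ∈ S) (hb : b ∈ S) :
    chordalDist a b ≤ sphericalDiam S :=
  le_csSup ⟨2, two_mem_upperBounds_image2_chordalDist S⟩ (mem_image2_of_mem ha hb)

lemma exists_pos_subset_closedBall_of_sphericalDiam_lt (L : ℂ) {ε : ℝ} (hε : 0 < ε) :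
    ∃ δ > 0, ∀ S : Set ℂ, ∀ a ∈ S, dist a L < δ → sphericalDiam S < δ →
      S ⊆ closedBall L ε := by
  set B := ‖L‖ + ε / 2 with hB
  refine ⟨min (ε / 2) (2 * (ε / 2) / ((1 + B + ε / 2) * (1 + B))), by positivity, ?_⟩
  intro S a ha haL hS z hz
  have haL' : dist a L < ε / 2 := haL.trans_le (min_le_left _ _)
  have haB : ‖a‖ ≤ B := by
    linarith [norm_le_norm_add_norm_sub' a L, dist_eq_norm a L]
  have hza : dist z a ≤ ε / 2 :=
    dist_le_of_chordalDist_lt (by positivity) (by positivity) haB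
      ((chordalDist_le_sphericalDiam hz ha).trans_lt (hS.trans_le (min_le_right _ _)))
  rw [mem_closedBall]
  linarith [dist_triangle z a L]

section MaximumModulus

variable {E : Type*} [NormedAddCommGroup E] [NormedSpace ℂ E]

theorem norm_le_on_annulus_of_norm_le_on_boundary {f : ℂ → E} {r₁ r₂ C : ℝ}
    (hf : DifferentiableOn ℂ f {z | r₁ ≤ ‖z‖ ∧ ‖z‖ ≤ r₂})
    (hC : ∀ z, ‖z‖ = r₁ ∨ ‖z‖ = r₂ → ‖f z‖ ≤ C) {z : ℂ} (hz₁ : r₁ ≤ ‖z‖) (hz₂ : ‖z‖ ≤ r₂) :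
    ‖f z‖ ≤ C := by
  rcases hz₁.eq_or_lt with hz₁ | hz₁
  · exact hC z (.inl hz₁.symm)
  rcases hz₂.eq_or_lt with hz₂ | hz₂
  · exact hC z (.inr hz₂)
  set U := {z : ℂ | r₁ < ‖z‖ ∧ ‖z‖ < r₂}
  have hU : IsOpen U :=
    (isOpen_lt continuous_const continuous_norm).inter (isOpen_lt continuous_norm continuous_const)
  have hclosure : closure U ⊆ {z | r₁ ≤ ‖z‖ ∧ ‖z‖ ≤ r₂} :=
    closure_minimal (fun w hw => ⟨hw.1.le, hw.2.le⟩)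
      ((isClosed_le continuous_const continuous_norm).inter
        (isClosed_le continuous_norm continuous_const))
  refine Complex.norm_le_of_forall_mem_frontier_norm_le
    (isBounded_ball.subset fun w hw => mem_ball_zero_iff.2 hw.2)
    (hf.mono hclosure).diffContOnCl (fun w hw => hC w ?_) (subset_closure ⟨hz₁, hz₂⟩)
  rw [hU.frontier_eq] at hw
  obtain ⟨hw₁, hw₂⟩ := hclosure hw.1
  by_contra! hne
  exact hw.2 ⟨hw₁.lt_of_ne' hne.1, hw₂.lt_of_ne hne.2⟩

theorem tendsto_nhdsNE_of_frequently_image_sphere_subset {f : ℂ → E} {R : ℝ} (hR : 0 < R)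
    (hf : DifferentiableOn ℂ f (ball 0 R \ {0})) {L : E}
    (hL : ∀ ε > 0, ∃ᶠ r in 𝓝[>] 0, f '' sphere 0 r ⊆ closedBall L ε) :
    Tendsto f (𝓝[≠] 0) (𝓝 L) := by
  refine nhds_basis_closedBall.tendsto_right_iff.2 fun ε hε => ?_
  obtain ⟨r₂, hr₂, ⟨hr₂0, hr₂R⟩⟩ := ((hL ε hε).and_eventually (Ioo_mem_nhdsGT hR)).exists
  filter_upwards [self_mem_nhdsWithin, nhdsWithin_le_nhds (ball_mem_nhds 0 hr₂0)] with z hz0 hzr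
  rw [mem_ball_zero_iff] at hzr
  obtain ⟨r₁, hr₁, ⟨hr₁0, hr₁z⟩⟩ :=
    ((hL ε hε).and_eventually (Ioo_mem_nhdsGT (norm_pos_iff.2 hz0))).exists
  have hannulus : {w : ℂ | r₁ ≤ ‖w‖ ∧ ‖w‖ ≤ r₂} ⊆ ball 0 R \ {0} := fun w hw =>
    ⟨mem_ball_zero_iff.2 (hw.2.trans_lt hr₂R), norm_pos_iff.1 (hr₁0.trans_le hw.1)⟩
  have hbd : ∀ w : ℂ, ‖w‖ = r₁ ∨ ‖w‖ = r₂ → ‖f w - L‖ ≤ ε := by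
    rintro w (hw | hw)
    · simpa [dist_eq_norm] using hr₁ (mem_image_of_mem f (mem_sphere_zero_iff_norm.2 hw))
    · simpa [dist_eq_norm] using hr₂ (mem_image_of_mem f (mem_sphere_zero_iff_norm.2 hw))
  simpa [dist_eq_norm] using norm_le_on_annulus_of_norm_le_on_boundary
    ((hf.mono hannulus).sub_const L) hbd hr₁z.le hzr.le

end MaximumModulus

section Dichotomy

variable {α E : Type*} [NormedAddCommGroup E] [ProperSpace E] {l : Filter α} {f : α → E}

theorem tendsto_coe_infty_of_tendsto_norm_atTop (h : Tendsto (fun x => ‖f x‖) l atTop) :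
    Tendsto (fun x => (f x : OnePoint E)) l (𝓝 ∞) := by
  refine OnePoint.tendsto_coe_infty.comp ?_
  rwa [coclosedCompact_eq_cocompact, ← cobounded_eq_cocompact,
    ← tendsto_norm_atTop_iff_cobounded]

theorem exists_mapClusterPt_of_not_tendsto_norm_atTop
    (h : ¬Tendsto (fun x => ‖f x‖) l atTop) : ∃ L, MapClusterPt L l f := by
  obtain ⟨C, hC⟩ := not_forall.1 (mt Filter.tendsto_atTop.2 h)
  obtain ⟨L, -, hL⟩ := (isCompact_closedBall (0 : E) C).exists_mapClusterPt_of_frequently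
    ((not_eventually.1 hC).mono fun x hx => mem_closedBall_zero_iff.2 (not_le.1 hx).le)
  exact ⟨L, hL⟩

end Dichotomy

theorem frequently_image_sphere_subset_closedBall {f : ℂ → ℂ} {L : ℂ}
    (hL : MapClusterPt L (𝓝[≠] 0) f)
    (hdiam : ∀ δ > 0, ∀ᶠ r in 𝓝[>] 0, sphericalDiam (f '' sphere 0 r) < δ)
    {ε : ℝ} (hε : 0 < ε) : ∃ᶠ r in 𝓝[>] 0, f '' sphere 0 r ⊆ closedBall L ε := by
  obtain ⟨δ, hδ, hsubset⟩ := exists_pos_subset_closedBall_of_sphericalDiam_lt L hε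
  have hclose : ∃ᶠ z in 𝓝[≠] 0, f z ∈ ball L δ :=
    mapClusterPt_iff_frequently.1 hL _ (ball_mem_nhds L hδ)
  have hnorm : Tendsto (‖·‖) (𝓝[≠] (0 : ℂ)) (𝓝[>] 0) := tendsto_norm_nhdsNE_zero
  refine hnorm.frequently ((hclose.and_eventually (hnorm.eventually (hdiam δ hδ))).mono ?_)
  rintro z ⟨hfz, hz⟩
  exact hsubset _ (f z) (mem_image_of_mem f (mem_sphere_zero_iff_norm.2 rfl)) hfz hz

theorem limsup_spherical_diam_pos_of_essential_singularity
    (f : ℂ → ℂ)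
    (hf : DifferentiableOn ℂ f (Metric.ball (0 : ℂ) 1 \ {0}))
    (hess : ¬ ∃ L : OnePoint ℂ,
      Tendsto (fun z => ((f z : ℂ) : OnePoint ℂ)) (𝓝[Metric.ball (0 : ℂ) 1 \ {0}] 0) (𝓝 L)) :
    0 < Filter.limsup (fun r : ℝ => sphericalDiam (f '' Metric.sphere (0 : ℂ) r)) (𝓝[>] (0 : ℝ)) := by
  by_contra! hle
  have hdiam : ∀ δ > 0, ∀ᶠ r in 𝓝[>] 0, sphericalDiam (f '' sphere 0 r) < δ := fun δ hδ =>
    eventually_lt_of_limsup_lt (hle.trans_lt hδ)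
      (isBoundedUnder_of ⟨2, fun r => sphericalDiam_le_two _⟩)
  rw [sdiff_eq, nhdsWithin_inter_of_mem (mem_nhdsWithin_of_mem_nhds (ball_mem_nhds 0 one_pos))]
    at hess
  by_cases hinf : Tendsto (fun z => ‖f z‖) (𝓝[≠] 0) atTop
  · exact hess ⟨∞, tendsto_coe_infty_of_tendsto_norm_atTop hinf⟩
  obtain ⟨L, hL⟩ := exists_mapClusterPt_of_not_tendsto_norm_atTop hinf
  have hfL : Tendsto f (𝓝[≠] 0) (𝓝 L) := tendsto_nhdsNE_of_frequently_image_sphere_subset one_pos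
    hf fun ε hε => frequently_image_sphere_subset_closedBall hL hdiam hε
  exact hess ⟨L, (OnePoint.continuous_coe.tendsto L).comp hfL⟩
end

section
/- (Hurwitz-type image inclusion, strong form) Let U ⊂ ℂ be open and connected, let f_k : U → ℂ be holomorphic with f_k → g locally uniformly on U, and suppose g is non-constant. Then for every w ∈ g(U) there exists k such that w ∈ f_k(U); in particular g(U) ⊆ ⋃_k f_k(U). -/
/-! If `g z₀ = w`, the identity theorem isolates `z₀` among the solutions of `g = w`, so
`‖g - w‖` is bounded below by some `ε > 0` on a small circle around `z₀`. Once `f k` is uniformly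
`ε / 2`-close to `g` on the closed disc, `‖f k - w‖` is `< ε / 2` at the centre and `≥ ε / 2` on
the circle, so by the maximum modulus principle applied to `1 / (f k - w)` the function `f k - w`
must vanish in the disc. -/

open Filter Topology Set Metric

theorem Complex.exists_eq_zero_of_forall_mem_frontier_le_norm {E : Type*}
    [NormedAddCommGroup E] [NormedSpace ℂ E] [Nontrivial E] {h : E → ℂ} {V : Set E} {z₀ : E}
    {ε : ℝ} (hV : Bornology.IsBounded V) (hh : DiffContOnCl ℂ h V) (hz₀ : z₀ ∈ closure V)
    (hlt : ‖h z₀‖ < ε) (hfrontier : ∀ z ∈ frontier V, ε ≤ ‖h z‖) : ∃ z ∈ V, h z = 0 := by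
  by_contra! hne
  have hne' : ∀ z ∈ closure V, h z ≠ 0 := by
    rw [closure_eq_self_union_frontier]
    rintro z (hz | hz)
    · exact hne z hz
    · exact norm_pos_iff.mp ((norm_nonneg _).trans_lt (hlt.trans_le (hfrontier z hz)))
  have hε : 0 < ε := (norm_nonneg _).trans_lt hlt
  have hinv : ‖(h z₀)⁻¹‖ ≤ ε⁻¹ :=
    Complex.norm_le_of_forall_mem_frontier_norm_le hV (hh.inv hne')
      (fun z hz => by simpa only [Pi.inv_apply, norm_inv] using inv_anti₀ hε (hfrontier z hz))
      hz₀
  rw [norm_inv] at hinv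
  exact hlt.not_ge ((inv_le_inv₀ (norm_pos_iff.mpr (hne' z₀ hz₀)) hε).mp hinv)

theorem AnalyticOnNhd.eventually_ne_of_exists_ne {𝕜 E : Type*} [NontriviallyNormedField 𝕜]
    [NormedAddCommGroup E] [NormedSpace 𝕜 E] {f : 𝕜 → E} {U : Set 𝕜} {z₀ : 𝕜}
    (hf : AnalyticOnNhd 𝕜 f U) (hU : IsPreconnected U) (hz₀ : z₀ ∈ U)
    (hne : ∃ x ∈ U, ∃ y ∈ U, f x ≠ f y) :
    ∀ᶠ z in 𝓝[≠] z₀, f z ≠ f z₀ := by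
  refine ((hf z₀ hz₀).eventually_eq_or_eventually_ne analyticAt_const).resolve_left
    fun hconst => ?_
  obtain ⟨x, hx, y, hy, hxy⟩ := hne
  have hEq := hf.eqOn_of_preconnected_of_eventuallyEq analyticOnNhd_const hU hz₀ hconst
  exact hxy ((hEq hx).trans (hEq hy).symm)

theorem exists_closedBall_subset_forall_mem_sphere_le_norm_sub {E F : Type*} [MetricSpace E]
    [ProperSpace E] [NormedAddCommGroup F] {g : E → F} {U : Set E} {z₀ : E} (hU : IsOpen U)
    (hz₀ : z₀ ∈ U) (hg : ContinuousOn g U) (hne : ∀ᶠ z in 𝓝[≠] z₀, g z ≠ g z₀) :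
    ∃ r > 0, closedBall z₀ r ⊆ U ∧ ∃ ε > 0, ∀ z ∈ sphere z₀ r, ε ≤ ‖g z - g z₀‖ := by
  obtain ⟨r, hr, hrU⟩ := nhds_basis_closedBall.mem_iff.mp
    (Eventually.and (hU.mem_nhds hz₀ : ∀ᶠ z in 𝓝 z₀, z ∈ U) (eventually_nhdsWithin_iff.mp hne))
  have hpos : ∀ z ∈ sphere z₀ r, 0 < ‖g z - g z₀‖ := fun z hz =>
    norm_pos_iff.mpr <| sub_ne_zero.mpr <|
      (hrU (sphere_subset_closedBall hz)).2 (ne_of_mem_sphere hz hr.ne')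
  have hcont : ContinuousOn (fun z => ‖g z - g z₀‖) (sphere z₀ r) :=
    ((hg.mono fun z hz => (hrU (sphere_subset_closedBall hz)).1).sub continuousOn_const).norm
  obtain ⟨ε, hε, hεle⟩ := (isCompact_sphere z₀ r).exists_forall_le' hcont hpos
  exact ⟨r, hr, fun z hz => (hrU hz).1, ε, hε, hεle⟩

theorem TendstoUniformlyOn.eventually_mem_image_ball {ι : Type*} {l : Filter ι}
    {f : ι → ℂ → ℂ} {g : ℂ → ℂ} {z₀ : ℂ} {r ε : ℝ}
    (hf : ∀ᶠ k in l, DiffContOnCl ℂ (f k) (ball z₀ r))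
    (hfg : TendstoUniformlyOn f g l (closedBall z₀ r)) (hr : 0 < r) (hε : 0 < ε)
    (hsphere : ∀ z ∈ sphere z₀ r, ε ≤ ‖g z - g z₀‖) : ∀ᶠ k in l, g z₀ ∈ f k '' ball z₀ r := by
  filter_upwards [hf, tendstoUniformlyOn_iff.mp hfg (ε / 2) (half_pos hε)] with k hfk hk
  have hcenter : ‖f k z₀ - g z₀‖ < ε / 2 := by
    simpa only [dist_eq_norm, norm_sub_rev] using hk z₀ (mem_closedBall_self hr.le)
  have hfrontier : ∀ z ∈ frontier (ball z₀ r), ε / 2 ≤ ‖f k z - g z₀‖ := by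
    rw [frontier_ball z₀ hr.ne']
    intro z hz
    have hclose : ‖g z - f k z‖ < ε / 2 := by
      simpa only [dist_eq_norm] using hk z (sphere_subset_closedBall hz)
    linarith [hsphere z hz, norm_sub_le_norm_sub_add_norm_sub (g z) (f k z) (g z₀)]
  obtain ⟨z, hz, hzero⟩ := Complex.exists_eq_zero_of_forall_mem_frontier_le_norm isBounded_ball
    (hfk.sub_const (g z₀)) (subset_closure (mem_ball_self hr)) hcenter hfrontier
  exact ⟨z, hz, sub_eq_zero.mp hzero⟩

theorem hurwitz_image_subset_union
    (U : Set ℂ) (hU : IsOpen U) (hUc : IsConnected U)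
    (f : ℕ → ℂ → ℂ) (g : ℂ → ℂ)
    (hf : ∀ k, DifferentiableOn ℂ (f k) U)
    (hconv : TendstoLocallyUniformlyOn f g atTop U)
    (hg : ∃ x ∈ U, ∃ y ∈ U, g x ≠ g y) :
    ∀ w ∈ g '' U, ∃ k, w ∈ f k '' U := by
  rintro w ⟨z₀, hz₀, rfl⟩
  have hgd : DifferentiableOn ℂ g U := hconv.differentiableOn (.of_forall hf) hU
  have hne : ∀ᶠ z in 𝓝[≠] z₀, g z ≠ g z₀ :=
    (hgd.analyticOnNhd hU).eventually_ne_of_exists_ne hUc.isPreconnected hz₀ hg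
  obtain ⟨r, hr, hrU, ε, hε, hsphere⟩ :=
    exists_closedBall_subset_forall_mem_sphere_le_norm_sub hU hz₀ hgd.continuousOn hne
  have hunif : TendstoUniformlyOn f g atTop (closedBall z₀ r) :=
    (tendstoLocallyUniformlyOn_iff_tendstoUniformlyOn_of_compact (isCompact_closedBall z₀ r)).mp
      (hconv.mono hrU)
  have hdiff : ∀ k, DiffContOnCl ℂ (f k) (ball z₀ r) := fun k =>
    ((hf k).mono hrU).diffContOnCl_ball subset_rfl
  obtain ⟨k, z, hz, hfz⟩ :=
    (hunif.eventually_mem_image_ball (.of_forall hdiff) hr hε hsphere).exists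
  exact ⟨k, z, hrU (ball_subset_closedBall hz), hfz⟩
end

section
/- Let f : B \ {0} → M be continuous (B the open unit ball in ℝⁿ, n ≥ 2, M a metric space), and suppose diam f(sphere(0,r)) < R/2 for all r ∈ (0, r₀). If f(sphere(0,r₁)) ⊆ B(a, R) for some r₁ < r₀ and some a ∈ M, and there exists a sequence w_j → 0 with d(f(w_j), a) > 4R eventually, then there exists r₂ ∈ (0, r₁) such that f(sphere(0,r₂)) meets the metric sphere {y : d(y,a) = 2R} and f(sphere(0,r₂)) ⊆ B(c, R/2) for some c with d(c,a) = 2R. -/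
/-! Follow the ray through a point `w` close to `0` at which `f` is far from `a`: along it, the
distance to `a` drops from more than `4R` at `‖w‖` to less than `R` at `r₁`, so by the
intermediate value theorem it equals `2R` at some radius `r₂`. The sphere of radius `r₂` is
mapped into a set of diameter `< R/2`, hence into the `R/2`-ball around the image `c` of that
point of the ray. -/

open Filter Topology Set Metric

theorem Metric.subset_ball_of_mem_of_diam_lt {M : Type*} [PseudoMetricSpace M] {A : Set M}
    {c : M} {r : ℝ} (hA : Bornology.IsBounded A) (hc : c ∈ A) (h : diam A < r) :
    A ⊆ ball c r :=
  fun _ hy => (dist_le_diam_of_mem hA hy hc).trans_lt h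

theorem Metric.sphere_subset_closedBall_sdiff_ball {X : Type*} [PseudoMetricSpace X] {x : X}
    {r s t : ℝ} (hsr : s ≤ r) (hrt : r ≤ t) : sphere x r ⊆ closedBall x t \ ball x s := by
  intro y hy
  rw [mem_sphere] at hy
  simp only [Set.mem_sdiff, mem_closedBall, mem_ball, hy, not_lt]
  exact ⟨hrt, hsr⟩

theorem Metric.closedBall_sdiff_ball_subset_ball_sdiff_singleton {X : Type*} [PseudoMetricSpace X]
    {x : X} {s t u : ℝ} (hs : 0 < s) (htu : t < u) :
    closedBall x t \ ball x s ⊆ ball x u \ {x} := by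
  rintro y ⟨hyt, hys⟩
  rw [mem_closedBall] at hyt
  rw [mem_ball, not_lt] at hys
  refine ⟨mem_ball.2 (hyt.trans_lt htu), fun hyx => ?_⟩
  rw [mem_singleton_iff.1 hyx, dist_self] at hys
  linarith

theorem ContinuousOn.exists_mem_sphere_dist_eq {E M : Type*} [NormedAddCommGroup E]
    [NormedSpace ℝ E] [PseudoMetricSpace M] {f : E → M} {w : E} {t d : ℝ} {a : M}
    (hw : w ≠ 0) (hwt : ‖w‖ ≤ t) (hf : ContinuousOn f (closedBall 0 t \ ball 0 ‖w‖))
    (hfw : d ≤ dist (f w) a) (ht : f '' sphere 0 t ⊆ ball a d) :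
    ∃ r ∈ Ico ‖w‖ t, ∃ x ∈ sphere (0 : E) r, dist (f x) a = d := by
  set γ : ℝ → E := fun r => (r * ‖w‖⁻¹) • w
  have hγ_norm : ∀ r, 0 ≤ r → ‖γ r‖ = r := fun _ hr =>
    norm_smul_inv_norm' (𝕜 := ℝ) hr hw
  have hγ_sphere : ∀ r ∈ Icc ‖w‖ t, γ r ∈ sphere (0 : E) r := fun r hr =>
    mem_sphere_zero_iff_norm.2 (hγ_norm r ((norm_nonneg w).trans hr.1))
  have hγw : γ ‖w‖ = w := by simp [γ, hw]
  have hγ_maps : MapsTo γ (Icc ‖w‖ t) (closedBall 0 t \ ball 0 ‖w‖) := fun r hr =>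
    sphere_subset_closedBall_sdiff_ball hr.1 hr.2 (hγ_sphere r hr)
  have hcont : ContinuousOn (fun r => dist (f (γ r)) a) (Icc ‖w‖ t) :=
    continuous_dist.comp_continuousOn
      ((hf.comp (by fun_prop) hγ_maps).prodMk continuousOn_const)
  have hγt : dist (f (γ t)) a < d :=
    ht (mem_image_of_mem f (hγ_sphere t ⟨hwt, le_rfl⟩))
  obtain ⟨r, hr, hr_eq⟩ := intermediate_value_Icc' hwt hcont ⟨hγt.le, by rwa [hγw]⟩
  refine ⟨r, ⟨hr.1, hr.2.lt_of_ne ?_⟩, γ r, hγ_sphere r hr, hr_eq⟩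
  rintro rfl
  exact hγt.ne hr_eq

theorem exists_touching_sphere_radius_general
    (n : ℕ) (M : Type*) [MetricSpace M]
    (f : EuclideanSpace ℝ (Fin n) → M)
    (hf : ContinuousOn f (Metric.ball (0 : EuclideanSpace ℝ (Fin n)) 1 \ {0}))
    (R r₀ : ℝ) (hR : 0 < R) (hr₀1 : r₀ ≤ 1)
    (hdiam : ∀ r ∈ Set.Ioo (0 : ℝ) r₀,
      Metric.diam (f '' Metric.sphere (0 : EuclideanSpace ℝ (Fin n)) r) < R / 2)
    (a : M) (r₁ : ℝ) (hr₁ : r₁ ∈ Set.Ioo (0 : ℝ) r₀)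
    (hin : f '' Metric.sphere (0 : EuclideanSpace ℝ (Fin n)) r₁ ⊆ Metric.ball a R)
    (w : ℕ → EuclideanSpace ℝ (Fin n))
    (hwmem : ∀ j, w j ∈ Metric.ball (0 : EuclideanSpace ℝ (Fin n)) 1 \ {0})
    (hw0 : Tendsto w atTop (𝓝 (0 : EuclideanSpace ℝ (Fin n))))
    (hwfar : ∀ᶠ j in atTop, 4 * R < dist (f (w j)) a) :
    ∃ r₂ ∈ Set.Ioo (0 : ℝ) r₁, ∃ c : M, dist c a = 2 * R ∧
      c ∈ f '' Metric.sphere (0 : EuclideanSpace ℝ (Fin n)) r₂ ∧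
      f '' Metric.sphere (0 : EuclideanSpace ℝ (Fin n)) r₂ ⊆ Metric.ball c (R / 2) := by
  have hsmall : ∀ᶠ j in atTop, ‖w j‖ < r₁ :=
    hw0.norm.eventually_lt_const (by simpa using hr₁.1)
  obtain ⟨j, hj_far, hj_small⟩ := (hwfar.and hsmall).exists
  have hwj : w j ≠ 0 := (hwmem j).2
  have hannulus :
      closedBall 0 r₁ \ ball 0 ‖w j‖ ⊆ ball (0 : EuclideanSpace ℝ (Fin n)) 1 \ {0} :=
    closedBall_sdiff_ball_subset_ball_sdiff_singleton (norm_pos_iff.2 hwj) (hr₁.2.trans_le hr₀1)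
  obtain ⟨r₂, hr₂, x, hx, hx_dist⟩ := (hf.mono hannulus).exists_mem_sphere_dist_eq hwj
    hj_small.le (by linarith : 2 * R ≤ _) (hin.trans (ball_subset_ball (by linarith)))
  have hr₂_pos : 0 < r₂ := (norm_pos_iff.2 hwj).trans_le hr₂.1
  have hsphere :
      sphere (0 : EuclideanSpace ℝ (Fin n)) r₂ ⊆ closedBall 0 r₁ \ ball 0 ‖w j‖ :=
    sphere_subset_closedBall_sdiff_ball hr₂.1 hr₂.2.le
  have hbdd : Bornology.IsBounded (f '' sphere 0 r₂) :=
    ((isCompact_sphere 0 r₂).image_of_continuousOn (hf.mono (hsphere.trans hannulus))).isBounded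
  exact ⟨r₂, ⟨hr₂_pos, hr₂.2⟩, f x, hx_dist, mem_image_of_mem f hx,
    subset_ball_of_mem_of_diam_lt hbdd (mem_image_of_mem f hx)
      (hdiam r₂ ⟨hr₂_pos, hr₂.2.trans hr₁.2⟩)⟩

theorem exists_touching_sphere_radius
    (n : ℕ) (hn : 2 ≤ n) (M : Type*) [MetricSpace M]
    (f : EuclideanSpace ℝ (Fin n) → M)
    (hf : ContinuousOn f (Metric.ball (0 : EuclideanSpace ℝ (Fin n)) 1 \ {0}))
    (R r₀ : ℝ) (hR : 0 < R) (hr₀ : 0 < r₀) (hr₀1 : r₀ ≤ 1)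
    (hdiam : ∀ r ∈ Set.Ioo (0 : ℝ) r₀,
      Metric.diam (f '' Metric.sphere (0 : EuclideanSpace ℝ (Fin n)) r) < R / 2)
    (a : M) (r₁ : ℝ) (hr₁ : r₁ ∈ Set.Ioo (0 : ℝ) r₀)
    (hin : f '' Metric.sphere (0 : EuclideanSpace ℝ (Fin n)) r₁ ⊆ Metric.ball a R)
    (w : ℕ → EuclideanSpace ℝ (Fin n))
    (hwmem : ∀ j, w j ∈ Metric.ball (0 : EuclideanSpace ℝ (Fin n)) 1 \ {0})
    (hw0 : Tendsto w atTop (𝓝 (0 : EuclideanSpace ℝ (Fin n))))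
    (hwfar : ∀ᶠ j in atTop, 4 * R < dist (f (w j)) a) :
    ∃ r₂ ∈ Set.Ioo (0 : ℝ) r₁, ∃ c : M, dist c a = 2 * R ∧
      c ∈ f '' Metric.sphere (0 : EuclideanSpace ℝ (Fin n)) r₂ ∧
      f '' Metric.sphere (0 : EuclideanSpace ℝ (Fin n)) r₂ ⊆ Metric.ball c (R / 2) :=
  exists_touching_sphere_radius_general n M f hf R r₀ hR hr₀1 hdiam a r₁ hr₁ hin w hwmem hw0 hwfar
end
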